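/- arXiv:2403.18534 — 3 statements merged into one kernel-verified Lean document; each statement's English description precedes it below -/
import Mathlib

section
/- Let t ≥ 4 and let K_{t,t}^− be the complete bipartite graph K_{t,t} minus one edge. In the unbiased Waiter-Client game in which Waiter offers only edges of K_{t,t}^−, Waiter has a strategy to force Client's graph to contain a perfect matching of K_{t,t} (using only edges of K_{t,t}^−) within t+1 rounds. -/
/-!
Waiter first offers two edges at `i₀` that avoid `j₀`; either way `i₀` gets matched. He then
reserves an unmatched right vertex `q` none of whose edges he offers until the end. While at
least three right vertices are unmatched, he offers two edges joining an unmatched left vertex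
to two unmatched right vertices other than `q`, and Client's choice extends the matching. With
left vertices `x₁, x₂` and right vertices `p, q` left, he offers `x₁p, x₂p`; say Client takes
`x₁p`. He then offers `yq, y'q` for two matched left vertices `y, y'` (this needs `t ≥ 4`); say
Client takes `yq`. Finally he offers `x₂q` and `x₂m(y)`, where `m(y)` is the partner of `y`:
the first completes the matching, the second does too after `y` is rematched to `q`.
This takes `1 + (t - 3) + 3 = t + 1` rounds.
-/

open scoped Classical

/-- `WaiterForcesIn goal r free client`: unbiased Waiter-Client game, Waiter can
force `goal client free` within at most `r` rounds. -/
inductive WaiterForcesIn {α : Type*} [DecidableEq α]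
    (goal : Finset α → Finset α → Prop) : ℕ → Finset α → Finset α → Prop
  | win {r : ℕ} {free client : Finset α} :
      goal client free → WaiterForcesIn goal r free client
  | offer {r : ℕ} {free client : Finset α} (e₁ e₂ : α)
      (h₁ : e₁ ∈ free) (h₂ : e₂ ∈ free) (hne : e₁ ≠ e₂)
      (hc₁ : WaiterForcesIn goal r (free \ {e₁, e₂}) (insert e₁ client))
      (hc₂ : WaiterForcesIn goal r (free \ {e₁, e₂}) (insert e₂ client)) :
      WaiterForcesIn goal (r + 1) free client

open Function Finset

section

variable {α : Type*}

def crossEdge (a b : α) : Sym2 (α ⊕ α) := s(.inl a, .inr b)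

@[simp]
theorem crossEdge_inj {a b c d : α} : crossEdge a b = crossEdge c d ↔ a = c ∧ b = d := by
  simp [crossEdge]

@[simp]
theorem inl_mem_crossEdge {x a b : α} : Sum.inl x ∈ crossEdge a b ↔ x = a := by
  simp [crossEdge]

@[simp]
theorem inr_mem_crossEdge {y a b : α} : Sum.inr y ∈ crossEdge a b ↔ y = b := by
  simp [crossEdge]

def HasPerfectMatchingIn {V : Type*} [DecidableEq V] (client : Finset (Sym2 V)) : Prop :=
  ∃ M ⊆ client, ∀ v : V, (M.filter (fun e => v ∈ e)).card = 1

variable [DecidableEq α]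

theorem hasPerfectMatchingIn_of_injective [Fintype α] {client : Finset (Sym2 (α ⊕ α))}
    {m : α → α} (hm : Injective m) (hclient : ∀ a, crossEdge a (m a) ∈ client) :
    HasPerfectMatchingIn client := by
  refine ⟨univ.image fun a => crossEdge a (m a), by simpa [image_subset_iff] using hclient, ?_⟩
  rintro (a | b)
  · exact card_eq_one.2 ⟨crossEdge a (m a), by ext e; aesop⟩
  · obtain ⟨a, rfl⟩ := Finite.surjective_of_injective hm b
    exact card_eq_one.2 ⟨crossEdge a (m a), by ext e; aesop⟩

theorem Set.InjOn.update {β : Type*} {s : Set α} {f : α → β} {x : α} {y : β}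
    (hf : Set.InjOn f (s \ {x})) (hy : ∀ a ∈ s, a ≠ x → f a ≠ y) :
    Set.InjOn (update f x y) s := by
  intro a ha b hb hab
  by_cases hax : a = x <;> by_cases hbx : b = x
  · rw [hax, hbx]
  · simp only [hax, update_self, update_of_ne hbx] at hab
    exact absurd hab.symm (hy b hb hbx)
  · simp only [hbx, update_self, update_of_ne hax] at hab
    exact absurd hab (hy a ha hax)
  · simp only [update_of_ne hax, update_of_ne hbx] at hab
    exact hf ⟨ha, hax⟩ ⟨hb, hbx⟩ hab

/-- `L` and `R` are the unmatched left and right vertices; `m a` is the partner of a matched left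
vertex `a`. -/
structure IsPartialMatching (client : Finset (Sym2 (α ⊕ α))) (L R : Finset α) (m : α → α) :
    Prop where
  injOn : Set.InjOn m (↑L)ᶜ
  notMem : ∀ a ∉ L, m a ∉ R
  mem_client : ∀ a ∉ L, crossEdge a (m a) ∈ client

namespace IsPartialMatching

variable {client client' : Finset (Sym2 (α ⊕ α))} {L R : Finset α} {m : α → α} {x u : α}

omit [DecidableEq α] in
theorem mono (h : IsPartialMatching client L R m) (hc : client ⊆ client') :
    IsPartialMatching client' L R m :=
  ⟨h.injOn, h.notMem, fun a ha => hc (h.mem_client a ha)⟩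

theorem extend (h : IsPartialMatching client L R m) (hu : u ∈ R)
    (hxu : crossEdge x u ∈ client) :
    IsPartialMatching client (L.erase x) (R.erase u) (update m x u) where
  injOn := by
    refine h.injOn.mono ?_ |>.update fun a ha hax => ?_
    · intro a ⟨ha, hax⟩
      simp_all
    · have haL : a ∉ L := by simpa [hax] using ha
      exact fun hau => h.notMem a haL (hau ▸ hu)
  notMem a ha := by
    by_cases hax : a = x
    · simp [hax]
    · have haL : a ∉ L := by simpa [hax] using ha
      simpa [update_of_ne hax] using fun _ => h.notMem a haL
  mem_client a ha := by
    by_cases hax : a = x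
    · simpa [hax] using hxu
    · have haL : a ∉ L := by simpa [hax] using ha
      simpa [update_of_ne hax] using h.mem_client a haL

theorem rematch (h : IsPartialMatching client L R m) (hx : x ∉ L) (hu : u ∈ R)
    (hxu : crossEdge x u ∈ client) :
    IsPartialMatching client L (insert (m x) (R.erase u)) (update m x u) where
  injOn := (h.injOn.mono Set.sdiff_subset).update fun a ha _ hau => h.notMem a ha (hau ▸ hu)
  notMem a ha := by
    by_cases hax : a = x
    · simpa [hax] using fun hux : u = m x => h.notMem x hx (hux ▸ hu)
    · simpa [update_of_ne hax, (h.injOn.ne_iff ha hx).2 hax] using fun _ => h.notMem a ha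
  mem_client a ha := by
    by_cases hax : a = x
    · simpa [hax] using hxu
    · simpa [update_of_ne hax] using h.mem_client a ha

theorem hasPerfectMatchingIn_of_extend [Fintype α] (h : IsPartialMatching client {x} R m)
    (hu : u ∈ R) (hxu : crossEdge x u ∈ client) : HasPerfectMatchingIn client := by
  have h' := h.extend hu hxu
  rw [erase_singleton] at h'
  exact hasPerfectMatchingIn_of_injective (fun a b hab => h'.injOn (by simp) (by simp) hab)
    (fun a => h'.mem_client a (notMem_empty a))

end IsPartialMatching

structure IsReservedPosition (client free : Finset (Sym2 (α ⊕ α))) (L R : Finset α) (q : α)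
    (m : α → α) : Prop extends IsPartialMatching client L R m where
  reserved_mem : q ∈ R
  mem_free : ∀ a b, a ∈ L ∨ b = q → crossEdge a b ∈ free

theorem IsReservedPosition.extend {client free : Finset (Sym2 (α ⊕ α))} {L R : Finset α}
    {q x u v : α} {m : α → α} (h : IsReservedPosition client free L R q m) (hu : u ∈ R)
    (huq : u ≠ q) (hvq : v ≠ q) :
    IsReservedPosition (insert (crossEdge x u) client) (free \ {crossEdge x u, crossEdge x v})
      (L.erase x) (R.erase u) q (update m x u) where
  toIsPartialMatching :=
    (h.mono (subset_insert _ _)).extend hu (mem_insert_self _ _)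
  reserved_mem := mem_erase.2 ⟨huq.symm, h.reserved_mem⟩
  mem_free a b hab := by
    refine mem_sdiff.2 ⟨h.mem_free a b (hab.imp_left mem_of_mem_erase), ?_⟩
    rcases hab with ha | rfl
    · simp [(ne_of_mem_erase ha)]
    · simp [huq.symm, hvq.symm]

section Game

variable [Fintype α] {client free : Finset (Sym2 (α ⊕ α))} {L R : Finset α} {m : α → α}

theorem waiterForcesIn_one_of_single_unmatched {x' x q : α}
    (hm : IsPartialMatching client {x'} R m) (hq : q ∈ R) (hx : x ≠ x')
    (hxq : crossEdge x q ∈ client) (h₁ : crossEdge x' q ∈ free)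
    (h₂ : crossEdge x' (m x) ∈ free) :
    WaiterForcesIn (fun c _ => HasPerfectMatchingIn c) 1 free client := by
  have hxL : x ∉ ({x'} : Finset α) := by simpa using hx
  have hmx : m x ≠ q := fun h => hm.notMem x hxL (h ▸ hq)
  have hm' := hm.mono (client' := insert (crossEdge x' q) client) (subset_insert _ _)
  have hm'' := hm.mono (client' := insert (crossEdge x' (m x)) client) (subset_insert _ _)
  refine .offer _ _ h₁ h₂ (by simpa using hmx.symm) (.win ?_) (.win ?_)
  · exact hm'.hasPerfectMatchingIn_of_extend hq (mem_insert_self _ _)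
  · -- Client took `x' – m x`: rematch `x` to `q`, which frees `m x` for `x'`.
    exact (hm''.rematch hxL hq (mem_insert_of_mem hxq)).hasPerfectMatchingIn_of_extend
      (mem_insert_self _ _) (by simp)

theorem waiterForcesIn_two_of_single_unmatched {x' x₁ x₂ q : α}
    (hm : IsPartialMatching client {x'} R m) (hq : q ∈ R) (hx₁ : x₁ ≠ x') (hx₂ : x₂ ≠ x')
    (h₁₂ : x₁ ≠ x₂) (hfree_q : ∀ a, crossEdge a q ∈ free)
    (hfree₁ : crossEdge x' (m x₁) ∈ free) (hfree₂ : crossEdge x' (m x₂) ∈ free) :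
    WaiterForcesIn (fun c _ => HasPerfectMatchingIn c) 2 free client := by
  have hfree : ∀ b, crossEdge x' b ∈ free → crossEdge x' b ∈ free \ {crossEdge x₁ q, crossEdge x₂ q} :=
    fun b hb => mem_sdiff.2 ⟨hb, by simp [hx₁.symm, hx₂.symm]⟩
  refine .offer _ _ (hfree_q x₁) (hfree_q x₂) (by simpa using h₁₂) ?_ ?_
  · exact waiterForcesIn_one_of_single_unmatched (hm.mono (subset_insert _ _)) hq hx₁
      (mem_insert_self _ _) (hfree _ (hfree_q x')) (hfree _ hfree₁)
  · rw [pair_comm]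
    exact waiterForcesIn_one_of_single_unmatched (hm.mono (subset_insert _ _)) hq hx₂
      (mem_insert_self _ _) (by simpa [pair_comm] using hfree _ (hfree_q x'))
      (by simpa [pair_comm] using hfree _ hfree₂)

theorem exists_two_notMem_pair (hα : 4 ≤ Fintype.card α) {x₁ x₂ : α} :
    ∃ y₁ y₂, y₁ ∉ ({x₁, x₂} : Finset α) ∧ y₂ ∉ ({x₁, x₂} : Finset α) ∧ y₁ ≠ y₂ := by
  have : 1 < ({x₁, x₂}ᶜ : Finset α).card := by
    rw [card_compl]
    have := card_le_two (a := x₁) (b := x₂)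
    omega
  obtain ⟨y₁, hy₁, y₂, hy₂, hy⟩ := one_lt_card.1 this
  exact ⟨y₁, y₂, mem_compl.1 hy₁, mem_compl.1 hy₂, hy⟩

theorem waiterForcesIn_three_of_two_unmatched (hα : 4 ≤ Fintype.card α) {x₁ x₂ p q : α}
    (h : IsReservedPosition client free {x₁, x₂} R q m) (h₁₂ : x₁ ≠ x₂) (hp : p ∈ R)
    (hpq : p ≠ q) :
    WaiterForcesIn (fun c _ => HasPerfectMatchingIn c) 3 free client := by
  obtain ⟨y₁, y₂, hy₁, hy₂, hy⟩ := exists_two_notMem_pair hα (x₁ := x₁) (x₂ := x₂)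
  have hmy : ∀ y ∉ ({x₁, x₂} : Finset α), m y ≠ p := fun y hy hyp => h.notMem y hy (hyp ▸ hp)
  have key : ∀ x x', ({x₁, x₂} : Finset α) = {x, x'} → x ≠ x' →
      WaiterForcesIn (fun c _ => HasPerfectMatchingIn c) 2
        (free \ {crossEdge x p, crossEdge x' p}) (insert (crossEdge x p) client) := by
    rintro x x' hL hxx'
    rw [hL] at h hy₁ hy₂ hmy
    have h' := (h.mono (subset_insert _ _)).extend (x := x) hp (mem_insert_self _ _)
    rw [erase_insert (by simpa using hxx')] at h'
    simp only [mem_insert, mem_singleton, not_or] at hy₁ hy₂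
    have hfree_y : ∀ y, ¬y = x ∧ ¬y = x' →
        crossEdge x' (update m x p y) ∈ free \ {crossEdge x p, crossEdge x' p} := by
      rintro y ⟨hyx, hyx'⟩
      rw [update_of_ne hyx]
      refine mem_sdiff.2 ⟨h.mem_free _ _ (.inl (by simp)), ?_⟩
      simp [hxx'.symm, hmy y (by simp [hyx, hyx'])]
    refine waiterForcesIn_two_of_single_unmatched h' (mem_erase.2 ⟨hpq.symm, h.reserved_mem⟩)
      hy₁.2 hy₂.2 hy (fun a => ?_) (hfree_y y₁ hy₁) (hfree_y y₂ hy₂)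
    exact mem_sdiff.2 ⟨h.mem_free a q (.inr rfl), by simp [hpq.symm]⟩
  refine .offer _ _ (h.mem_free _ _ (by simp)) (h.mem_free _ _ (by simp)) (by simpa using h₁₂)
    (key x₁ x₂ rfl h₁₂) ?_
  rw [pair_comm]
  exact key x₂ x₁ (pair_comm _ _) h₁₂.symm

theorem IsReservedPosition.waiterForcesIn (hα : 4 ≤ Fintype.card α) {q : α}
    (h : IsReservedPosition client free L R q m) (hLR : L.card = R.card) (hL : 2 ≤ L.card) :
    WaiterForcesIn (fun c _ => HasPerfectMatchingIn c) (L.card + 1) free client := by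
  obtain ⟨n, hn⟩ : ∃ n, L.card = n + 2 := ⟨L.card - 2, by omega⟩
  rw [hn]
  clear hL
  induction n generalizing client free L R m with
  | zero =>
    obtain ⟨x₁, x₂, h₁₂, rfl⟩ := card_eq_two.1 hn
    obtain ⟨p, hp⟩ : (R.erase q).Nonempty :=
      card_pos.1 (by rw [card_erase_of_mem h.reserved_mem]; omega)
    obtain ⟨hpq, hp⟩ := mem_erase.1 hp
    exact waiterForcesIn_three_of_two_unmatched hα h h₁₂ hp hpq
  | succ n ih =>
    obtain ⟨x, hx⟩ := card_pos.1 (by omega : 0 < L.card)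
    obtain ⟨u, hu, v, hv, huv⟩ := one_lt_card.1
      (by rw [card_erase_of_mem h.reserved_mem]; omega : 1 < (R.erase q).card)
    obtain ⟨huq, hu⟩ := mem_erase.1 hu
    obtain ⟨hvq, hv⟩ := mem_erase.1 hv
    have hcard : ∀ w ∈ R, (L.erase x).card = (R.erase w).card ∧ (L.erase x).card = n + 2 :=
      fun w hw => by rw [card_erase_of_mem hx, card_erase_of_mem hw]; omega
    refine .offer _ _ (h.mem_free x u (.inl hx)) (h.mem_free x v (.inl hx))
      (by simpa using huv) ?_ ?_
    · exact ih (h.extend hu huq hvq) (hcard u hu).1 (hcard u hu).2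
    · rw [pair_comm]
      exact ih (h.extend hv hvq huq) (hcard v hv).1 (hcard v hv).2

theorem waiterForcesIn_after_first_round (hα : 4 ≤ Fintype.card α) {F : Finset (Sym2 (α ⊕ α))}
    {i₀ j₀ c d : α} (hF : ∀ a b, a ≠ i₀ ∨ b ≠ j₀ → crossEdge a b ∈ F) :
    WaiterForcesIn (fun c _ => HasPerfectMatchingIn c) (Fintype.card α)
      (F \ {crossEdge i₀ c, crossEdge i₀ d}) (insert (crossEdge i₀ c) ∅) := by
  obtain ⟨q, hq⟩ : ({c, d, j₀}ᶜ : Finset α).Nonempty := by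
    rw [← card_pos, card_compl]
    have := card_le_three (a := c) (b := d) (c := j₀)
    omega
  simp only [mem_compl, mem_insert, mem_singleton, not_or] at hq
  obtain ⟨hqc, hqd, hqj⟩ := hq
  have h : IsReservedPosition (insert (crossEdge i₀ c) ∅) (F \ {crossEdge i₀ c, crossEdge i₀ d})
      (univ.erase i₀) (univ.erase c) q (fun _ => c) :=
    { injOn a ha b hb _ := by
        have hi₀ : ∀ y ∉ univ.erase i₀, y = i₀ := fun y hy => by simpa using hy
        rw [hi₀ a ha, hi₀ b hb]
      notMem a _ := by simp
      mem_client a ha := by simp_all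
      reserved_mem := by simpa using hqc
      mem_free a b hab := by
        rcases hab with ha | rfl
        · have ha : a ≠ i₀ := ne_of_mem_erase ha
          exact mem_sdiff.2 ⟨hF a b (.inl ha), by simp [ha]⟩
        · exact mem_sdiff.2 ⟨hF a b (.inr hqj), by simp [hqc, hqd]⟩ }
  have hcard : (univ.erase i₀).card = Fintype.card α - 1 := by simp
  convert h.waiterForcesIn hα (by simp) (by omega) using 1
  omega

theorem waiterForcesIn_perfectMatching_of_missing_edge (hα : 4 ≤ Fintype.card α)
    {F : Finset (Sym2 (α ⊕ α))} {i₀ j₀ : α} (hF : ∀ a b, a ≠ i₀ ∨ b ≠ j₀ → crossEdge a b ∈ F) :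
    WaiterForcesIn (fun c _ => HasPerfectMatchingIn c) (Fintype.card α + 1) F ∅ := by
  obtain ⟨c, hc, d, hd, hcd⟩ := one_lt_card.1
    (by rw [card_erase_of_mem (mem_univ _), card_univ]; omega : 1 < (univ.erase j₀).card)
  refine .offer (crossEdge i₀ c) (crossEdge i₀ d) (hF _ _ (.inr (ne_of_mem_erase hc)))
    (hF _ _ (.inr (ne_of_mem_erase hd))) (by simpa using hcd)
    (waiterForcesIn_after_first_round hα hF) ?_
  rw [pair_comm]
  exact waiterForcesIn_after_first_round hα hF

end Game

end

/-- let `t ≥ 4` and let `K_{t,t}⁻` be `K_{t,t}` minus one edge.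
Offering only edges of `K_{t,t}⁻`, Waiter can force Client's graph to contain a
perfect matching of `K_{t,t}` within `t+1` rounds.  The vertex classes are the
two copies of `Fin t`, and the removed edge joins `i₀` to `j₀`. -/
theorem stmt_6 (t : ℕ) (ht : 4 ≤ t) (i₀ j₀ : Fin t) :
    WaiterForcesIn
      (fun client _free =>
        ∃ M : Finset (Sym2 (Fin t ⊕ Fin t)), M ⊆ client ∧
          ∀ v : Fin t ⊕ Fin t, (M.filter (fun e => v ∈ e)).card = 1)
      (t + 1)
      (((Finset.univ ×ˢ Finset.univ : Finset (Fin t × Fin t)).image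
          (fun p => s(Sum.inl p.1, Sum.inr p.2))) \ {s(Sum.inl i₀, Sum.inr j₀)})
      ∅ := by
  have h := waiterForcesIn_perfectMatching_of_missing_edge (α := Fin t) (i₀ := i₀) (j₀ := j₀)
    (F := ((univ ×ˢ univ).image fun p => s(Sum.inl p.1, Sum.inr p.2)) \
      {s(Sum.inl i₀, Sum.inr j₀)})
    (by simpa using ht) (fun a b hab => by simpa [crossEdge, imp_iff_not_or] using hab)
  rwa [Fintype.card_fin] at h
end

section
/- Let F be a rooted forest with e(F) edges, and let B be a complete graph on at least v(F) + e(F) vertices, with distinct target vertices fixed for the roots of F. Then in the unbiased Waiter-Client game on B, Waiter can force, within at most e(F) rounds, a red copy of F in which every root is mapped to its fixed target vertex, every colored edge has an endpoint at a non-leaf of the red copy, and the blue edges between the copy and the remaining vertices form a star forest in which each star is centered at a vertex u of the copy and has at most deg(u) edges. -/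
open SimpleGraph

open scoped Classical

/-!
Orient each tree of `F` away from its root, with depth the distance to the root. Waiter embeds
the vertices in order of depth: to embed `v` he offers the edges from the image of its parent to
two untouched vertices. Client's edge fixes the image of `v`; Waiter's edge ends in a vertex that
is never touched again. Each of the `e(F)` rounds touches two new vertices, so `v(F) + e(F)`
vertices suffice. Every colored edge contains the image of a parent, which is not a leaf, and the
blue edges at the image of `u` correspond to distinct children of `u`, which gives the star forest.
-/

open Finset

lemma Finset.sdiff_insert_union_insert {α : Type*} [DecidableEq α] (A X Y : Finset α) (x y : α) :
    A \ (insert x X ∪ insert y Y) = (A \ (X ∪ Y)) \ {x, y} := by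
  ext
  simp only [mem_sdiff, mem_union, mem_insert, mem_singleton]
  tauto

namespace Set

variable {α γ : Type*} [DecidableEq α] {s : Set α} {a : α}

lemma eqOn_update_of_notMem (ha : a ∉ s) (f : α → γ) (c : γ) :
    EqOn (Function.update f a c) f s :=
  fun _ hx => Function.update_of_ne (ne_of_mem_of_not_mem hx ha) _ _

lemma InjOn.update_insert {f : α → γ} {c : γ} (hf : InjOn f s) (ha : a ∉ s) (hc : c ∉ f '' s) :
    InjOn (Function.update f a c) (insert a s) := by
  rw [injOn_insert ha, Function.update_self, (eqOn_update_of_notMem ha f c).image_eq]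
  exact ⟨hf.congr (eqOn_update_of_notMem ha f c).symm, hc⟩

end Set

namespace SimpleGraph

variable {V : Type*} {G : SimpleGraph V}

lemma Walk.dist_le_of_mem_support {u v x : V} (p : G.Walk u v) (hx : x ∈ p.support) :
    G.dist u x ≤ p.length :=
  (dist_le (p.takeUntil x hx)).trans (p.length_takeUntil_le_length hx)

lemma Reachable.exists_adj_dist_add_one {u v : V} (h : G.Reachable u v) (hne : u ≠ v) :
    ∃ a, G.Adj a v ∧ G.dist u a + 1 = G.dist u v := by
  obtain ⟨p, hp⟩ := h.exists_walk_length_eq_dist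
  have hnil : ¬p.Nil := Walk.not_nil_of_ne hne
  refine ⟨p.penultimate, p.adj_penultimate hnil, le_antisymm ?_ ?_⟩
  · have := dist_le p.dropLast
    have := Walk.length_dropLast_add_one hnil
    omega
  · obtain ⟨q, hq⟩ := p.dropLast.reachable.exists_walk_length_eq_dist
    simpa [hq] using dist_le (q.concat (p.adj_penultimate hnil))

lemma IsAcyclic.eq_of_adj_of_dist_add_one (hG : G.IsAcyclic) {u v a b : V}
    (hr : G.Reachable u v) (ha : G.Adj a v) (hb : G.Adj b v)
    (hda : G.dist u a + 1 = G.dist u v) (hdb : G.dist u b + 1 = G.dist u v) : a = b := by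
  obtain ⟨p, hp, -⟩ := hr.exists_path_of_dist
  -- both `a` and `b` are the penultimate vertex of the unique path from `u` to `v`
  have key : ∀ x, G.Adj x v → G.dist u x + 1 = G.dist u v → x = p.penultimate := by
    intro x hx hdx
    obtain ⟨q, hq, hql⟩ := (hr.trans hx.symm.reachable).exists_path_of_dist
    have hvq : v ∉ q.support := fun hv => by
      have := q.dist_le_of_mem_support hv
      omega
    exact hG.eq_penultimate_of_adj_end hp hx.symm
      (hG.mem_support_of_ne_mem_support_of_adj_of_isPath hp hq hx.symm hvq)
  rw [key a ha hda, key b hb hdb]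

structure ParentPointers (G : SimpleGraph V) (R : Finset V) where
  parent : V → V
  depth : V → ℕ
  adj_parent : ∀ v ∉ R, G.Adj (parent v) v
  depth_parent : ∀ v ∉ R, depth (parent v) + 1 = depth v
  adj_cases : ∀ ⦃u v⦄, G.Adj u v → (v ∉ R ∧ parent v = u) ∨ (u ∉ R ∧ parent u = v)

lemma IsAcyclic.nonempty_parentPointers (hG : G.IsAcyclic) (R : Finset V)
    (hR : ∀ v, ∃! r, r ∈ R ∧ G.Reachable v r) : Nonempty (G.ParentPointers R) := by
  choose root hroot using fun v => (hR v).exists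
  have root_eq : ∀ v r, r ∈ R → G.Reachable v r → root v = r :=
    fun v r hr hvr => (hR v).unique (hroot v) ⟨hr, hvr⟩
  have root_adj : ∀ ⦃a b⦄, G.Adj a b → root a = root b := fun a b h =>
    (root_eq b _ (hroot a).1 (h.symm.reachable.trans (hroot a).2)).symm
  have reach : ∀ v, G.Reachable (root v) v := fun v => (hroot v).2.symm
  have mem_iff : ∀ v, v ∈ R ↔ root v = v :=
    fun v => ⟨fun h => root_eq v v h .rfl, fun h => h ▸ (hroot v).1⟩
  let depth v := G.dist (root v) v
  have hpar : ∀ v ∉ R, ∃ a, G.Adj a v ∧ depth a + 1 = depth v := fun v hv => by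
    obtain ⟨a, ha, hda⟩ := (reach v).exists_adj_dist_add_one fun h => hv ((mem_iff v).2 h)
    exact ⟨a, ha, by simpa only [depth, root_adj ha] using hda⟩
  choose! parent hadj hdepth using hpar
  have eq_parent : ∀ ⦃a v⦄, G.Adj a v → depth a + 1 = depth v → v ∉ R ∧ parent v = a := by
    intro a v hav hd
    have hv : v ∉ R := fun h => by simp [depth, (mem_iff v).1 h] at hd
    refine ⟨hv, hG.eq_of_adj_of_dist_add_one (reach v) (hadj v hv) hav ?_ ?_⟩
    · simpa only [depth, root_adj (hadj v hv)] using hdepth v hv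
    · simpa only [depth, root_adj hav] using hd
  refine ⟨⟨parent, depth, hadj, hdepth, fun u v huv => ?_⟩⟩
  rcases hG.dist_eq_dist_add_one_of_adj_of_reachable (root u) huv (reach u) with h | h
  · exact .inr (eq_parent huv.symm (by simp only [depth, ← root_adj huv]; omega))
  · exact .inl (eq_parent huv (by simp only [depth, ← root_adj huv]; omega))

namespace ParentPointers

variable {R : Finset V} (P : G.ParentPointers R)

lemma exists_parent_mem {S : Set V} (hRS : ↑R ⊆ S) (hS : ∃ v, v ∉ S) :
    ∃ v ∉ S, v ∉ R ∧ P.parent v ∈ S := by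
  obtain ⟨v, hvS, hmin⟩ := (InvImage.wf P.depth wellFounded_lt).has_min Sᶜ hS
  have hvR : v ∉ R := fun h => hvS (hRS h)
  refine ⟨v, hvS, hvR, by_contra fun h => hmin _ h ?_⟩
  exact Nat.lt_of_succ_le (P.depth_parent v hvR).le

lemma one_lt_degree_parent [G.LocallyFinite] {v : V} (hv : v ∉ R) (hpv : P.parent v ∉ R) :
    1 < G.degree (P.parent v) := by
  have hne : P.parent (P.parent v) ≠ v := fun h => by
    have h1 := P.depth_parent v hv
    have h2 := P.depth_parent _ hpv
    rw [h] at h2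
    omega
  have hsub : {P.parent (P.parent v), v} ⊆ G.neighborFinset (P.parent v) := by
    intro x hx
    rcases mem_insert.mp hx with rfl | hx
    · simpa using (P.adj_parent _ hpv).symm
    · simpa [mem_singleton.mp hx] using P.adj_parent v hv
  calc 1 < #{P.parent (P.parent v), v} := by rw [card_pair hne]; norm_num
    _ ≤ G.degree (P.parent v) := (card_le_card hsub).trans_eq (card_neighborFinset_eq_degree _ _)

lemma card_children_le_degree [Fintype V] [G.LocallyFinite] (u : V) :
    #{v | v ∉ R ∧ P.parent v = u} ≤ G.degree u := by
  rw [← card_neighborFinset_eq_degree]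
  refine card_le_card fun v hv => ?_
  simp only [mem_filter, mem_univ, true_and] at hv
  simpa [← hv.2] using P.adj_parent v hv.1

lemma card_compl_eq_card_edgeFinset [Fintype V] [Fintype G.edgeSet] (P : G.ParentPointers R) :
    #(univ \ R) = #G.edgeFinset := by
  refine card_bij (fun v _ => s(P.parent v, v)) (fun v hv => ?_) (fun a ha b hb hab => ?_)
    (fun e he => ?_)
  · simpa using P.adj_parent v (by simpa using hv)
  · simp only [mem_sdiff, mem_univ, true_and] at ha hb
    rcases Sym2.eq_iff.mp hab with ⟨-, h⟩ | ⟨h₁, h₂⟩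
    · exact h
    · have ha' := P.depth_parent a ha
      have hb' := P.depth_parent b hb
      rw [h₁] at ha'
      rw [← h₂] at hb'
      omega
  · induction e using Sym2.ind with
    | _ u v =>
      rcases P.adj_cases (mem_edgeFinset.mp he) with ⟨hv, h⟩ | ⟨hu, h⟩
      · exact ⟨v, by simpa using hv, by rw [h]⟩
      · exact ⟨u, by simpa using hu, by rw [h, Sym2.eq_swap]⟩

end ParentPointers

end SimpleGraph

section GreedyGame

variable {V β : Type*}

def IsForcedCopy [Fintype V] [Fintype β] [DecidableEq β] (F : SimpleGraph V) (R : Finset V)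
    (g : V → β) (client free : Finset (Sym2 β)) : Prop :=
  ∃ f : V ↪ β,
    (∀ u v : V, F.Adj u v → s(f u, f v) ∈ client) ∧
    (∀ r ∈ R, f r = g r) ∧
    (∀ e ∈ (⊤ : SimpleGraph β).edgeFinset \ free,
      ∃ u : V, f u ∈ e ∧ ¬(F.degree u = 1 ∧ u ∉ R)) ∧
    (∀ w : β, w ∉ Set.range f →
      (((((⊤ : SimpleGraph β).edgeFinset \ free) \ client).filter
          (fun e => w ∈ e ∧ ∃ u : V, f u ∈ e)).card ≤ 1)) ∧
    (∀ u : V,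
      (((((⊤ : SimpleGraph β).edgeFinset \ free) \ client).filter
          (fun e => f u ∈ e ∧ ∃ w : β, w ∈ e ∧ w ∉ Set.range f)).card
        ≤ F.degree u))

noncomputable def touchedVertices [DecidableEq β] (R S : Finset V) (f b : V → β) : Finset β :=
  S.image f ∪ (S \ R).image b

namespace SimpleGraph.ParentPointers

variable {F : SimpleGraph V} {R : Finset V} (P : F.ParentPointers R)

structure IsGreedyState (g : V → β) (S : Finset V) (f b : V → β) : Prop where
  roots_subset : R ⊆ S
  parent_mem : ∀ v ∈ S \ R, P.parent v ∈ S
  injOn_f : Set.InjOn f S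
  injOn_b : Set.InjOn b ↑(S \ R)
  f_ne_b : ∀ u ∈ S, ∀ v ∈ S \ R, f u ≠ b v
  map_root : ∀ r ∈ R, f r = g r

lemma isGreedyState_roots {g : V → β} (hg : Set.InjOn g R) : P.IsGreedyState g R g g where
  roots_subset := subset_rfl
  parent_mem v hv := absurd (mem_sdiff.mp hv).1 (mem_sdiff.mp hv).2
  injOn_f := hg
  injOn_b := by simp
  f_ne_b _ _ v hv := absurd (mem_sdiff.mp hv).1 (mem_sdiff.mp hv).2
  map_root _ _ := rfl

variable [DecidableEq β] {g : V → β} {S : Finset V} {f b : V → β}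

/- The position in which the vertices of `S` are embedded by `f`, each non-root `v ∈ S` in the
round where Waiter offered the edges from `f (parent v)` to `f v` and to `b v`. -/
noncomputable def redEdges (S : Finset V) (f : V → β) : Finset (Sym2 β) :=
  (S \ R).image fun v => s(f (P.parent v), f v)

noncomputable def blueEdges (S : Finset V) (f b : V → β) : Finset (Sym2 β) :=
  (S \ R).image fun v => s(f (P.parent v), b v)

lemma mk_mem_redEdges {u v : V} (huv : F.Adj u v) (hu : u ∈ S) (hv : v ∈ S) :
    s(f u, f v) ∈ P.redEdges S f := by
  rcases P.adj_cases huv with ⟨hvR, hpv⟩ | ⟨huR, hpu⟩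
  · exact mem_image.mpr ⟨v, mem_sdiff.mpr ⟨hv, hvR⟩, by rw [hpv]⟩
  · exact mem_image.mpr ⟨u, mem_sdiff.mpr ⟨hu, huR⟩, by rw [hpu, Sym2.eq_swap]⟩

lemma exists_not_isLeaf_mem [F.LocallyFinite] {e : Sym2 β}
    (he : e ∈ P.redEdges S f ∪ P.blueEdges S f b) :
    ∃ u : V, f u ∈ e ∧ ¬(F.degree u = 1 ∧ u ∉ R) := by
  simp only [redEdges, blueEdges, mem_union, mem_image] at he
  obtain ⟨v, hv, rfl⟩ | ⟨v, hv, rfl⟩ := he <;>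
    exact ⟨P.parent v, Sym2.mem_mk_left _ _, fun ⟨h1, h2⟩ =>
      (P.one_lt_degree_parent (mem_sdiff.mp hv).2 h2).ne' h1⟩

variable {P}

lemma IsGreedyState.mem_touchedVertices (hs : P.IsGreedyState g S f b) {e : Sym2 β}
    (he : e ∈ P.redEdges S f ∪ P.blueEdges S f b) {x : β} (hx : x ∈ e) :
    x ∈ touchedVertices R S f b := by
  simp only [redEdges, blueEdges, mem_union, mem_image] at he
  rcases he with ⟨v, hv, rfl⟩ | ⟨v, hv, rfl⟩ <;>
    rcases Sym2.mem_iff.mp hx with rfl | rfl <;>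
    simp only [touchedVertices, mem_union, mem_image]
  · exact .inl ⟨_, hs.parent_mem v hv, rfl⟩
  · exact .inl ⟨v, (mem_sdiff.mp hv).1, rfl⟩
  · exact .inl ⟨_, hs.parent_mem v hv, rfl⟩
  · exact .inr ⟨v, hv, rfl⟩

lemma IsGreedyState.exists_pair_notMem_touchedVertices [Fintype V] [Fintype β]
    [Fintype F.edgeSet] (hs : P.IsGreedyState g S f b)
    (hboard : Fintype.card V + #F.edgeFinset ≤ Fintype.card β) {v : V} (hv : v ∉ S) :
    ∃ w₁ ∉ touchedVertices R S f b, ∃ w₂ ∉ touchedVertices R S f b, w₁ ≠ w₂ := by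
  have hvR : v ∉ R := fun h => hv (hs.roots_subset h)
  have hS : #S < Fintype.card V := card_lt_univ_of_notMem hv
  have hSR : #(S \ R) < #(univ \ R) := card_lt_card
    ⟨sdiff_subset_sdiff (subset_univ S) subset_rfl, fun h => hv (mem_sdiff.mp (h (by simpa))).1⟩
  rw [P.card_compl_eq_card_edgeFinset] at hSR
  have hT : #(touchedVertices R S f b) ≤ #S + #(S \ R) :=
    (card_union_le _ _).trans (add_le_add card_image_le card_image_le)
  obtain ⟨w₁, hw₁, w₂, hw₂, hw₁₂⟩ := one_lt_card.mp <| show 1 < #(univ \ touchedVertices R S f b) by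
    rw [card_sdiff_of_subset (subset_univ _), card_univ]
    omega
  exact ⟨w₁, (mem_sdiff.mp hw₁).2, w₂, (mem_sdiff.mp hw₂).2, hw₁₂⟩

lemma IsGreedyState.mk_mem_free [Fintype β] (hs : P.IsGreedyState g S f b) {x : V} (hx : x ∈ S)
    {w : β} (hw : w ∉ touchedVertices R S f b) :
    s(f x, w) ∈ (⊤ : SimpleGraph β).edgeFinset \ (P.redEdges S f ∪ P.blueEdges S f b) := by
  have hxT : f x ∈ touchedVertices R S f b := mem_union_left _ (mem_image_of_mem f hx)
  refine mem_sdiff.mpr ⟨by simpa using fun h : f x = w => hw (h ▸ hxT), fun h => ?_⟩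
  exact hw (hs.mem_touchedVertices h (Sym2.mem_mk_right _ _))

lemma IsGreedyState.redEdges_insert (hs : P.IsGreedyState g S f b) {v : V} (hv : v ∉ S)
    (hpv : P.parent v ∈ S) (w : β) :
    P.redEdges (insert v S) (Function.update f v w) =
      insert s(f (P.parent v), w) (P.redEdges S f) := by
  have hvR : v ∉ R := fun h => hv (hs.roots_subset h)
  rw [redEdges, redEdges, insert_sdiff_of_notMem _ hvR, image_insert, Function.update_self,
    Set.eqOn_update_of_notMem hv f w hpv]
  refine congrArg _ (image_congr fun x hx => ?_)
  rw [Set.eqOn_update_of_notMem hv f w (mem_sdiff.mp hx).1,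
    Set.eqOn_update_of_notMem hv f w (hs.parent_mem x hx)]

lemma IsGreedyState.blueEdges_insert (hs : P.IsGreedyState g S f b) {v : V} (hv : v ∉ S)
    (hpv : P.parent v ∈ S) (w w' : β) :
    P.blueEdges (insert v S) (Function.update f v w) (Function.update b v w') =
      insert s(f (P.parent v), w') (P.blueEdges S f b) := by
  have hvR : v ∉ R := fun h => hv (hs.roots_subset h)
  rw [blueEdges, blueEdges, insert_sdiff_of_notMem _ hvR, image_insert, Function.update_self,
    Set.eqOn_update_of_notMem hv f w hpv]
  refine congrArg _ (image_congr fun x hx => ?_)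
  rw [Set.eqOn_update_of_notMem hv b w' (mem_sdiff.mp hx).1,
    Set.eqOn_update_of_notMem hv f w (hs.parent_mem x hx)]

lemma IsGreedyState.insert_update (hs : P.IsGreedyState g S f b) {v : V} (hv : v ∉ S)
    (hpv : P.parent v ∈ S) {w w' : β} (hw : w ∉ touchedVertices R S f b)
    (hw' : w' ∉ touchedVertices R S f b) (hww' : w ≠ w') :
    P.IsGreedyState g (insert v S) (Function.update f v w) (Function.update b v w') := by
  simp only [touchedVertices, mem_union, not_or, mem_image, not_exists, not_and] at hw hw'
  have hvR : v ∉ R := fun h => hv (hs.roots_subset h)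
  have hvSR : v ∉ S \ R := fun h => hv (mem_sdiff.mp h).1
  have hf := Set.eqOn_update_of_notMem (s := ↑S) hv f w
  have hb := Set.eqOn_update_of_notMem (s := ↑(S \ R)) hvSR b w'
  refine ⟨hs.roots_subset.trans (subset_insert _ _), fun x hx => ?_, ?_, ?_, ?_, fun r hr => ?_⟩
  · rw [insert_sdiff_of_notMem _ hvR, mem_insert] at hx
    rcases hx with rfl | hx
    exacts [mem_insert_of_mem hpv, mem_insert_of_mem (hs.parent_mem x hx)]
  · rw [coe_insert]
    exact hs.injOn_f.update_insert hv fun ⟨x, hx, hfx⟩ => hw.1 x hx hfx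
  · rw [insert_sdiff_of_notMem _ hvR, coe_insert]
    exact hs.injOn_b.update_insert hvSR fun ⟨x, hx, hbx⟩ => hw'.2 x hx hbx
  · intro x hx y hy
    rw [insert_sdiff_of_notMem _ hvR] at hy
    rcases mem_insert.mp hx with rfl | hxS <;> rcases mem_insert.mp hy with rfl | hyS
    · simpa using hww'
    · rw [Function.update_self, hb hyS]
      exact fun h => hw.2 y hyS h.symm
    · rw [Function.update_self, hf hxS]
      exact hw'.1 x hxS
    · rw [hf hxS, hb hyS]
      exact hs.f_ne_b x hxS y hyS
  · rw [hf (hs.roots_subset hr)]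
    exact hs.map_root r hr

lemma IsGreedyState.card_filter_blueEdges_le_one (hs : P.IsGreedyState g S f b) {w : β}
    (hw : w ∉ S.image f) : #{e ∈ P.blueEdges S f b | w ∈ e} ≤ 1 := by
  have hb : ∀ e ∈ {e ∈ P.blueEdges S f b | w ∈ e},
      ∃ v ∈ S \ R, b v = w ∧ e = s(f (P.parent v), w) := by
    intro e he
    simp only [blueEdges, mem_filter, mem_image] at he
    obtain ⟨⟨v, hv, rfl⟩, hwe⟩ := he
    rcases Sym2.mem_iff.mp hwe with rfl | rfl
    · exact absurd (mem_image_of_mem f (hs.parent_mem v hv)) hw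
    · exact ⟨v, hv, rfl, rfl⟩
  refine card_le_one.mpr fun e₁ he₁ e₂ he₂ => ?_
  obtain ⟨v₁, hv₁, hb₁, rfl⟩ := hb e₁ he₁
  obtain ⟨v₂, hv₂, hb₂, rfl⟩ := hb e₂ he₂
  rw [hs.injOn_b (mem_coe.mpr hv₁) (mem_coe.mpr hv₂) (hb₁.trans hb₂.symm)]

lemma IsGreedyState.card_filter_blueEdges_le_degree [Fintype V] [F.LocallyFinite]
    (hs : P.IsGreedyState g S f b) {u : V} (hu : u ∈ S) :
    #{e ∈ P.blueEdges S f b | f u ∈ e} ≤ F.degree u := by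
  have hsub : {e ∈ P.blueEdges S f b | f u ∈ e} ⊆
      ({v | v ∉ R ∧ P.parent v = u} : Finset V).image fun v => s(f u, b v) := by
    intro e he
    simp only [blueEdges, mem_filter, mem_image] at he
    obtain ⟨⟨v, hv, rfl⟩, hue⟩ := he
    rcases Sym2.mem_iff.mp hue with h | h
    · have hpv := hs.injOn_f (mem_coe.mpr hu) (mem_coe.mpr (hs.parent_mem v hv)) h
      exact mem_image.mpr ⟨v, by simpa [hpv] using (mem_sdiff.mp hv).2, by rw [hpv]⟩
    · exact absurd h (hs.f_ne_b u hu v hv)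
  exact (card_le_card hsub).trans (card_image_le.trans (P.card_children_le_degree u))

lemma IsGreedyState.isForcedCopy_univ [Fintype V] [Fintype β]
    (hs : P.IsGreedyState g univ f b) :
    IsForcedCopy F R g (P.redEdges univ f)
      ((⊤ : SimpleGraph β).edgeFinset \ (P.redEdges univ f ∪ P.blueEdges univ f b)) := by
  set red := P.redEdges univ f
  set blue := P.blueEdges univ f b
  have hinj : Function.Injective f := by simpa using hs.injOn_f
  have hcolored : (⊤ : SimpleGraph β).edgeFinset \ ((⊤ : SimpleGraph β).edgeFinset \ (red ∪ blue))
      ⊆ red ∪ blue := by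
    rw [sdiff_sdiff_self_left]
    exact inter_subset_right
  have hblue : ((⊤ : SimpleGraph β).edgeFinset \ ((⊤ : SimpleGraph β).edgeFinset \ (red ∪ blue)))
      \ red ⊆ blue := fun e he =>
    (mem_union.mp (hcolored (mem_sdiff.mp he).1)).resolve_left (mem_sdiff.mp he).2
  refine ⟨⟨f, hinj⟩, fun u v huv => P.mk_mem_redEdges huv (mem_univ u) (mem_univ v), hs.map_root,
    fun e he => P.exists_not_isLeaf_mem (hcolored he), fun w hw => ?_, fun u => ?_⟩
  · refine (card_le_card ?_).trans (hs.card_filter_blueEdges_le_one (w := w) (by simpa using hw))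
    exact (filter_subset_filter _ hblue).trans (monotone_filter_right _ fun _ _ h => h.1)
  · refine (card_le_card ?_).trans (hs.card_filter_blueEdges_le_degree (mem_univ u))
    exact (filter_subset_filter _ hblue).trans (monotone_filter_right _ fun _ _ h => h.1)

theorem IsGreedyState.waiterForcesIn [Fintype V] [Fintype β] [Fintype F.edgeSet]
    (hboard : Fintype.card V + #F.edgeFinset ≤ Fintype.card β) (n : ℕ) :
    ∀ {S : Finset V} {f b : V → β}, P.IsGreedyState g S f b → #(univ \ S) = n →
      WaiterForcesIn (IsForcedCopy F R g) n
        ((⊤ : SimpleGraph β).edgeFinset \ (P.redEdges S f ∪ P.blueEdges S f b))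
        (P.redEdges S f) := by
  induction n with
  | zero =>
    intro S f b hs hn
    obtain rfl : S = univ := by simpa [sdiff_eq_empty_iff_subset] using hn
    exact .win hs.isForcedCopy_univ
  | succ n ih =>
    intro S f b hs hn
    obtain ⟨u, hu⟩ := card_pos.mp (by omega : 0 < #(univ \ S))
    obtain ⟨v, hvS, -, hpv⟩ := P.exists_parent_mem (S := ↑S) (coe_subset.mpr hs.roots_subset)
      ⟨u, (mem_sdiff.mp hu).2⟩
    obtain ⟨w₁, hw₁, w₂, hw₂, hw₁₂⟩ := hs.exists_pair_notMem_touchedVertices hboard hvS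
    set T := touchedVertices R S f b
    have hrespond : ∀ {w w'}, w ∉ T → w' ∉ T → w ≠ w' →
        WaiterForcesIn (IsForcedCopy F R g) n
          (((⊤ : SimpleGraph β).edgeFinset \ (P.redEdges S f ∪ P.blueEdges S f b)) \
            {s(f (P.parent v), w), s(f (P.parent v), w')})
          (insert s(f (P.parent v), w) (P.redEdges S f)) := by
      intro w w' hw hw' hww'
      have hn' : #(univ \ insert v S) = n := by
        rw [sdiff_insert, card_erase_of_mem (by simpa using hvS), hn, Nat.add_sub_cancel]
      have := ih (hs.insert_update hvS hpv hw hw' hww') hn'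
      rwa [hs.redEdges_insert hvS hpv, hs.blueEdges_insert hvS hpv,
        sdiff_insert_union_insert] at this
    exact .offer _ _ (hs.mk_mem_free hpv hw₁) (hs.mk_mem_free hpv hw₂)
      (fun h => hw₁₂ (Sym2.congr_right.mp h)) (hrespond hw₁ hw₂ hw₁₂)
      (by rw [pair_comm]; exact hrespond hw₂ hw₁ hw₁₂.symm)

end SimpleGraph.ParentPointers

end GreedyGame

/-- let `F` be a rooted forest (an acyclic graph with exactly one
designated root in each component) and let `B` be a complete graph on at least
`v(F) + e(F)` vertices, with distinct target vertices fixed for the roots.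
Then Waiter can force, within at most `e(F)` rounds, a red copy of `F` in which
every root is mapped to its fixed target, every colored edge has an endpoint at
a non-leaf of the red copy (a leaf being a degree-1 non-root), and the blue
edges between the copy and the remaining vertices form a star forest in which
each star is centered at a copy vertex `f u` and has at most `deg_F(u)` edges. -/
theorem stmt_9 {V β : Type*} [Fintype V] [Fintype β] [DecidableEq β]
    (F : SimpleGraph V) (hforest : F.IsAcyclic)
    (R : Finset V) (hroots : ∀ v : V, ∃! r : V, r ∈ R ∧ F.Reachable v r)
    (hboard : Fintype.card V + F.edgeFinset.card ≤ Fintype.card β)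
    (g : V → β) (hg : Set.InjOn g (R : Set V)) :
    WaiterForcesIn
      (fun client free =>
        ∃ f : V ↪ β,
          -- red copy of F
          (∀ u v : V, F.Adj u v → s(f u, f v) ∈ client) ∧
          -- roots go to their fixed targets
          (∀ r ∈ R, f r = g r) ∧
          -- every colored edge has an endpoint at a non-leaf of the copy
          (∀ e ∈ (⊤ : SimpleGraph β).edgeFinset \ free,
            ∃ u : V, f u ∈ e ∧ ¬(F.degree u = 1 ∧ u ∉ R)) ∧
          -- blue edges between the copy and the rest form a star forest:
          -- each outside vertex lies in at most one such blue edge ...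
          (∀ w : β, w ∉ Set.range f →
            (((((⊤ : SimpleGraph β).edgeFinset \ free) \ client).filter
                (fun e => w ∈ e ∧ ∃ u : V, f u ∈ e)).card ≤ 1)) ∧
          -- ... and the star centered at `f u` has at most `deg_F(u)` edges
          (∀ u : V,
            (((((⊤ : SimpleGraph β).edgeFinset \ free) \ client).filter
                (fun e => f u ∈ e ∧ ∃ w : β, w ∈ e ∧ w ∉ Set.range f)).card
              ≤ F.degree u)))
      F.edgeFinset.card ((⊤ : SimpleGraph β).edgeFinset) ∅ := by
  obtain ⟨P⟩ := hforest.nonempty_parentPointers R hroots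
  have hgame := (P.isGreedyState_roots hg).waiterForcesIn hboard _
    P.card_compl_eq_card_edgeFinset
  simp only [ParentPointers.redEdges, ParentPointers.blueEdges, sdiff_self, bot_eq_empty,
    image_empty, union_empty, sdiff_empty] at hgame
  exact hgame
end

section
/- Let n be large enough and let 𝓗 = (X, 𝓕) be a hypergraph with |X| = n, |𝓕| ≤ n^{log n}, and every hyperedge containing at least log³ n vertices. Then in the Waiter-Client game on 𝓗, Waiter has a strategy such that at the end of the game the set C of Client's elements satisfies |C ∩ f| ≥ |f|/100 for every f ∈ 𝓕. -/
open scoped Classical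

/-- `WaiterForcesEnd goal free client`: in the unbiased Waiter-Client game with
unclaimed set `free` and Client's set `client`, Waiter can guarantee, against
any play of Client, that at the end of the game (when at most one unclaimed
element remains, and it goes to Waiter) `goal` holds for Client's final set. -/
inductive WaiterForcesEnd {α : Type} [DecidableEq α]
    (goal : Finset α → Prop) : Finset α → Finset α → Prop
  | win {free client : Finset α} :
      free.card ≤ 1 → goal client → WaiterForcesEnd goal free client
  | offer {free client : Finset α} (e₁ e₂ : α)
      (h₁ : e₁ ∈ free) (h₂ : e₂ ∈ free) (hne : e₁ ≠ e₂)
      (hc₁ : WaiterForcesEnd goal (free \ {e₁, e₂}) (insert e₁ client))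
      (hc₂ : WaiterForcesEnd goal (free \ {e₁, e₂}) (insert e₂ client)) :
      WaiterForcesEnd goal free client


/-!
Waiter plays an Erdős–Selfridge strategy against
`𝓕' = {f \ A : f ∈ 𝓕, A ⊆ f, |A| = ⌊|f|/100⌋}`: if Client's set `C` meets every member of `𝓕'`,
then `C ∩ f` fits in no `⌊|f|/100⌋`-subset of `f`, so `|C ∩ f| > ⌊|f|/100⌋`.

Waiter can force Client to meet every member of a family `G` with `∑_{F ∈ G} 2^{-|F|} < 1/2`.
Let `P(s)` be the sum of `2^{-|F ∩ free|}` over the members `F ⊇ s` of `G` that Client has not met.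
Waiter offers the pair `{u, v}` maximising `P{u} + P{v} + P{u, v}`; whichever element Client takes,
the invariant `P(∅) < 1`, `P(∅) + P{z} < 1` for all free `z` survives, and once at most one free
element remains it forbids an unmet member.

For `𝓕'`, a hyperedge of size `m ≥ log³ n` contributes `C(m, ⌊m/100⌋) 2^{-(m - ⌊m/100⌋)} ≤ (3/5)^m`,
so the sum is at most `n^{log n} e^{-(2/5) log³ n} < 1/2` as soon as `log n ≥ 3`.
-/

open Finset

section Potential

variable {α : Type} [DecidableEq α]

noncomputable def waiterPotential (G : Finset (Finset α)) (free client s : Finset α) : ℝ :=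
  ∑ F ∈ G with Disjoint F client ∧ s ⊆ F, (2⁻¹ : ℝ) ^ #(F ∩ free)

variable (G : Finset (Finset α)) (free client : Finset α)

lemma waiterPotential_nonneg (s : Finset α) : 0 ≤ waiterPotential G free client s :=
  sum_nonneg fun _ _ => by positivity

lemma waiterPotential_anti {s t : Finset α} (hst : s ⊆ t) :
    waiterPotential G free client t ≤ waiterPotential G free client s :=
  sum_le_sum_of_subset_of_nonneg (monotone_filter_right _ fun _ _ h => ⟨h.1, hst.trans h.2⟩)
    fun _ _ _ => by positivity

lemma pow_card_inter_le_waiterPotential {F s : Finset α} (hF : F ∈ G)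
    (hFc : Disjoint F client) (hsF : s ⊆ F) :
    (2⁻¹ : ℝ) ^ #(F ∩ free) ≤ waiterPotential G free client s :=
  single_le_sum (f := fun F => (2⁻¹ : ℝ) ^ #(F ∩ free)) (fun _ _ => by positivity)
    (mem_filter.2 ⟨hF, hFc, hsF⟩)

lemma inter_sdiff_pair_eq_erase {F : Finset α} {c : α} (hc : c ∉ F) (d : α) :
    F ∩ (free \ {c, d}) = (F ∩ free).erase d := by
  ext x
  by_cases hx : x = c
  · simp_all
  · simp only [mem_inter, mem_sdiff, mem_insert, mem_singleton, mem_erase, hx, false_or]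
    tauto

-- Client taking `c` kills the members through `c`; those through `d` but not `c` double in weight.
lemma waiterPotential_insert_sdiff_pair {c d : α} (hd : d ∈ free) (s : Finset α) :
    waiterPotential G (free \ {c, d}) (insert c client) s =
      waiterPotential G free client s - waiterPotential G free client (insert c s) +
        (waiterPotential G free client (insert d s) -
          waiterPotential G free client (insert c (insert d s))) := by
  simp only [waiterPotential, sum_filter, ← sum_sub_distrib, ← sum_add_distrib]
  refine sum_congr rfl fun F _ => ?_
  by_cases hcF : c ∈ F
  · simp [hcF, disjoint_insert_right, insert_subset_iff]
  rw [inter_sdiff_pair_eq_erase free hcF]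
  by_cases hdF : d ∈ F
  · have hcard := card_erase_add_one (mem_inter.2 ⟨hdF, hd⟩)
    rw [← hcard]
    simp only [disjoint_insert_right, hcF, hdF, insert_subset_iff, not_false_eq_true, true_and,
      false_and, and_false, ↓reduceIte, sub_zero]
    split_ifs <;> ring
  · simp [hcF, hdF, disjoint_insert_right, insert_subset_iff, erase_eq_of_notMem]

end Potential

section Strategy

variable {α : Type} [DecidableEq α] (G : Finset (Finset α))

def WaiterInvariant (free client : Finset α) : Prop :=
  waiterPotential G free client ∅ < 1 ∧
    ∀ z ∈ free, waiterPotential G free client ∅ + waiterPotential G free client {z} < 1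

variable {G} {free client : Finset α}

lemma WaiterInvariant.not_disjoint (h : WaiterInvariant G free client) (hfree : #free ≤ 1)
    {F : Finset α} (hF : F ∈ G) : ¬Disjoint F client := by
  intro hFc
  have hw {s} (hs : s ⊆ F) := pow_card_inter_le_waiterPotential G free client hF hFc hs
  have hw₀ := hw (empty_subset F)
  rcases Nat.le_one_iff_eq_zero_or_eq_one.1 ((card_le_card inter_subset_right).trans hfree)
    with h0 | h1
  · rw [h0, pow_zero] at hw₀
    linarith [h.1]
  · obtain ⟨z, hz⟩ := card_eq_one.1 h1
    obtain ⟨hzF, hzfree⟩ := mem_inter.1 (hz ▸ mem_singleton_self z)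
    have hz' := hw (singleton_subset_iff.2 hzF)
    rw [h1, pow_one] at hw₀ hz'
    linarith [h.2 z hzfree]

lemma WaiterInvariant.insert_sdiff_pair (h : WaiterInvariant G free client) {c d : α}
    (hd : d ∈ free)
    (hmax : ∀ z ∈ free, z ≠ c → z ≠ d →
      waiterPotential G free client {z} + waiterPotential G free client {d, z} ≤
        waiterPotential G free client {c} + waiterPotential G free client {c, d}) :
    WaiterInvariant G (free \ {c, d}) (insert c client) := by
  have hP := waiterPotential_insert_sdiff_pair G free client (c := c) hd
  have hP₀ := hP ∅
  simp only [insert_empty] at hP₀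
  have hnn := waiterPotential_nonneg G free client
  refine ⟨?_, fun z hz => ?_⟩
  · rw [hP₀]
    linarith [h.2 d hd, hnn {c}, hnn {c, d}]
  · obtain ⟨hz, hzcd⟩ := mem_sdiff.1 hz
    simp only [mem_insert, mem_singleton, not_or] at hzcd
    rw [hP₀, hP {z}]
    linarith [h.2 d hd, hmax z hz hzcd.1 hzcd.2, hnn {c}, hnn {c, d}, hnn {c, z}, hnn {c, d, z}]

lemma WaiterInvariant.exists_offer (h : WaiterInvariant G free client) (hfree : 1 < #free) :
    ∃ e₁ ∈ free, ∃ e₂ ∈ free, e₁ ≠ e₂ ∧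
      WaiterInvariant G (free \ {e₁, e₂}) (insert e₁ client) ∧
      WaiterInvariant G (free \ {e₁, e₂}) (insert e₂ client) := by
  set P := waiterPotential G free client
  obtain ⟨u, hu, v, hv, huv⟩ := one_lt_card.1 hfree
  obtain ⟨p, hp, hpmax⟩ := exists_max_image free.offDiag
    (fun p => P {p.1} + P {p.2} + P {p.1, p.2}) ⟨(u, v), mem_offDiag.2 ⟨hu, hv, huv⟩⟩
  obtain ⟨hp₁, hp₂, hp₁₂⟩ := mem_offDiag.1 hp
  have hstep {c d : α} (hd : d ∈ free)
      (hcd : P {c} + P {d} + P {c, d} = P {p.1} + P {p.2} + P {p.1, p.2}) :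
      WaiterInvariant G (free \ {c, d}) (insert c client) :=
    h.insert_sdiff_pair hd fun z hz _ hzd => by
      linarith [hpmax (d, z) (mem_offDiag.2 ⟨hd, hz, Ne.symm hzd⟩)]
  refine ⟨p.1, hp₁, p.2, hp₂, hp₁₂, hstep hp₂ rfl, ?_⟩
  rw [pair_comm]
  exact hstep hp₁ (by rw [pair_comm]; ring)

theorem WaiterForcesEnd.mono {goal goal' : Finset α → Prop} (hgoal : ∀ C, goal C → goal' C)
    (h : WaiterForcesEnd goal free client) : WaiterForcesEnd goal' free client := by
  induction h with
  | win hfree hC => exact .win hfree (hgoal _ hC)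
  | offer e₁ e₂ h₁ h₂ hne _ _ ih₁ ih₂ => exact .offer e₁ e₂ h₁ h₂ hne ih₁ ih₂

theorem WaiterForcesEnd.of_waiterInvariant (h : WaiterInvariant G free client) :
    WaiterForcesEnd (fun C => ∀ F ∈ G, ¬Disjoint F C) free client := by
  induction free using Finset.strongInduction generalizing client with
  | H free ih =>
  by_cases hfree : #free ≤ 1
  · exact .win hfree fun F hF => h.not_disjoint hfree hF
  obtain ⟨e₁, h₁, e₂, h₂, hne, hinv₁, hinv₂⟩ := h.exists_offer (not_le.1 hfree)
  have hsub : free \ {e₁, e₂} ⊂ free :=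
    sdiff_ssubset (insert_subset h₁ (singleton_subset_iff.2 h₂)) ⟨e₁, mem_insert_self _ _⟩
  exact .offer e₁ e₂ h₁ h₂ hne (ih _ hsub hinv₁) (ih _ hsub hinv₂)

theorem WaiterForcesEnd.of_sum_lt_half [Fintype α] (h : ∑ F ∈ G, (2⁻¹ : ℝ) ^ #F < 2⁻¹) :
    WaiterForcesEnd (fun C => ∀ F ∈ G, ¬Disjoint F C) univ ∅ := by
  have hP : waiterPotential G univ ∅ ∅ < 2⁻¹ := by simpa [waiterPotential] using h
  refine .of_waiterInvariant ⟨by linarith, fun z _ => ?_⟩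
  linarith [waiterPotential_anti G univ ∅ (empty_subset {z})]

end Strategy

section SdiffFamily

variable {α : Type} [DecidableEq α]

def sdiffFamily (r : ℕ) (𝓕 : Finset (Finset α)) : Finset (Finset α) :=
  (𝓕.sigma fun f => f.powersetCard (#f / r)).image fun p => p.1 \ p.2

lemma sdiff_mem_sdiffFamily {r : ℕ} {𝓕 : Finset (Finset α)} {f A : Finset α} (hf : f ∈ 𝓕)
    (hAf : A ⊆ f) (hA : #A = #f / r) : f \ A ∈ sdiffFamily r 𝓕 :=
  mem_image.2 ⟨⟨f, A⟩, mem_sigma.2 ⟨hf, mem_powersetCard.2 ⟨hAf, hA⟩⟩, rfl⟩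

lemma sum_pow_card_sdiffFamily_le (r : ℕ) (𝓕 : Finset (Finset α)) :
    ∑ F ∈ sdiffFamily r 𝓕, (2⁻¹ : ℝ) ^ #F ≤
      ∑ f ∈ 𝓕, ((#f).choose (#f / r) : ℝ) * 2⁻¹ ^ (#f - #f / r) := by
  refine (sum_image_le_of_nonneg fun _ _ => by positivity).trans_eq ?_
  rw [sum_sigma]
  refine sum_congr rfl fun f _ => ?_
  have hcard : ∀ A ∈ f.powersetCard (#f / r), #(f \ A) = #f - #f / r := fun A hA => by
    rw [card_sdiff_of_subset (mem_powersetCard.1 hA).1, (mem_powersetCard.1 hA).2]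
  rw [sum_congr rfl fun A hA => by rw [hcard A hA], sum_const, card_powersetCard, nsmul_eq_mul]

lemma div_le_card_inter_of_forall_not_disjoint {r : ℕ} {𝓕 : Finset (Finset α)} {C : Finset α}
    (hC : ∀ F ∈ sdiffFamily r 𝓕, ¬Disjoint F C) {f : Finset α} (hf : f ∈ 𝓕) :
    (#f : ℝ) / r ≤ #(C ∩ f) := by
  have hlt : #f / r < #(C ∩ f) := by
    by_contra! hle
    obtain ⟨A, hCA, hAf, hA⟩ :=
      exists_subsuperset_card_eq inter_subset_right hle (Nat.div_le_self _ _)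
    have hdisj : Disjoint (f \ A) C := disjoint_left.2 fun x hx hxC =>
      (mem_sdiff.1 hx).2 (hCA (mem_inter.2 ⟨hxC, (mem_sdiff.1 hx).1⟩))
    exact hC (f \ A) (sdiff_mem_sdiffFamily hf hAf hA) hdisj
  rcases r.eq_zero_or_pos with rfl | hr
  · simp
  · rw [div_le_iff₀ (by positivity)]
    exact_mod_cast ((Nat.div_lt_iff_lt_mul hr).1 hlt).le

end SdiffFamily

lemma choose_mul_pow_le_one_add_pow (m k : ℕ) {x : ℝ} (hx : 0 ≤ x) :
    (m.choose k : ℝ) * x ^ k ≤ (1 + x) ^ m := by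
  rcases le_or_gt k m with hk | hk
  · rw [add_comm, add_pow]
    refine le_of_eq_of_le ?_ (single_le_sum (f := fun j => x ^ j * 1 ^ (m - j) * (m.choose j))
      (fun _ _ => by positivity) (mem_range.2 (Nat.lt_succ_of_le hk)))
    simp [mul_comm]
  · rw [Nat.choose_eq_zero_of_lt hk, Nat.cast_zero, zero_mul]
    positivity

lemma choose_div_hundred_mul_pow_le (m : ℕ) :
    (m.choose (m / 100) : ℝ) * 2⁻¹ ^ (m - m / 100) ≤ (3 / 5) ^ m := by
  set k := m / 100
  have hkm : 100 * k ≤ m := Nat.mul_div_le m 100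
  have h200 : (200 : ℝ) ^ k ≤ (11 / 10) ^ m :=
    calc (200 : ℝ) ^ k ≤ ((11 / 10) ^ 100) ^ k := pow_le_pow_left₀ (by norm_num) (by norm_num) k
      _ = (11 / 10) ^ (100 * k) := (pow_mul _ _ _).symm
      _ ≤ (11 / 10) ^ m := pow_le_pow_right₀ (by norm_num) hkm
  calc (m.choose k : ℝ) * 2⁻¹ ^ (m - k)
      = (m.choose k * (1 / 100) ^ k) * 200 ^ k * 2⁻¹ ^ m := by
        rw [pow_sub₀ _ (by norm_num) (by omega), ← inv_pow, inv_inv, mul_assoc _ _ (200 ^ k),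
          ← mul_pow]
        ring
    _ ≤ (1 + 1 / 100) ^ m * (11 / 10) ^ m * 2⁻¹ ^ m := by
        gcongr
        exact choose_mul_pow_le_one_add_pow m k (by norm_num)
    _ = (1111 / 2000) ^ m := by rw [← mul_pow, ← mul_pow]; norm_num
    _ ≤ (3 / 5) ^ m := pow_le_pow_left₀ (by norm_num) (by norm_num) m

lemma sum_pow_card_sdiffFamily_lt_half {α : Type} [DecidableEq α] {𝓕 : Finset (Finset α)}
    {L : ℝ} (hL : 3 ≤ L) (h𝓕 : (#𝓕 : ℝ) ≤ Real.exp (L * L)) (hsize : ∀ f ∈ 𝓕, L ^ 3 ≤ #f) :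
    ∑ F ∈ sdiffFamily 100 𝓕, (2⁻¹ : ℝ) ^ #F < 2⁻¹ := by
  have hterm : ∀ f ∈ 𝓕,
      ((#f).choose (#f / 100) : ℝ) * 2⁻¹ ^ (#f - #f / 100) ≤ Real.exp (-(2 / 5 * L ^ 3)) :=
    fun f hf => calc
      _ ≤ (3 / 5 : ℝ) ^ #f := choose_div_hundred_mul_pow_le _
      _ ≤ Real.exp (-(2 / 5)) ^ #f :=
        pow_le_pow_left₀ (by norm_num) (by linarith [Real.add_one_le_exp (-(2 / 5))]) _
      _ = Real.exp (-(2 / 5 * #f)) := by rw [← Real.exp_nat_mul]; ring_nf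
      _ ≤ _ := Real.exp_le_exp.2 (by linarith [hsize f hf])
  calc ∑ F ∈ sdiffFamily 100 𝓕, (2⁻¹ : ℝ) ^ #F
      ≤ ∑ f ∈ 𝓕, ((#f).choose (#f / 100) : ℝ) * 2⁻¹ ^ (#f - #f / 100) :=
        sum_pow_card_sdiffFamily_le 100 𝓕
    _ ≤ #𝓕 * Real.exp (-(2 / 5 * L ^ 3)) := by simpa using sum_le_card_nsmul _ _ _ hterm
    _ ≤ Real.exp (L * L) * Real.exp (-(2 / 5 * L ^ 3)) := by gcongr
    _ = Real.exp (L * L - 2 / 5 * L ^ 3) := by rw [← Real.exp_add]; ring_nf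
    _ ≤ Real.exp (-1) :=
        Real.exp_le_exp.2 (by nlinarith [mul_nonneg (sub_nonneg.2 hL) (sq_nonneg L)])
    _ < 2⁻¹ := by simpa using Real.exp_neg_one_lt_half

/-- for `n` large enough, for every hypergraph `𝓗 = (X, 𝓕)` with
`|X| = n`, `|𝓕| ≤ n^{log n}`, and every hyperedge of size at least `log³ n`, in
the Waiter-Client game on `𝓗` Waiter has a strategy so that at the end of the
game Client's set `C` satisfies `|C ∩ f| ≥ |f|/100` for all `f ∈ 𝓕`. -/
theorem stmt_13 :
    ∃ n₀ : ℕ, ∀ n : ℕ, n₀ ≤ n →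
      ∀ (X : Type) [Fintype X] [DecidableEq X] (𝓕 : Finset (Finset X)),
        Fintype.card X = n →
        (𝓕.card : ℝ) ≤ (n : ℝ) ^ (Real.log n) →
        (∀ f ∈ 𝓕, (Real.log n) ^ 3 ≤ (f.card : ℝ)) →
        WaiterForcesEnd
          (fun client => ∀ f ∈ 𝓕, (f.card : ℝ) / 100 ≤ ((client ∩ f).card : ℝ))
          (Finset.univ : Finset X) ∅ := by
  refine ⟨⌈Real.exp 3⌉₊, fun n hn X _ _ 𝓕 _ h𝓕 hsize => ?_⟩
  have hn3 : Real.exp 3 ≤ n := Nat.ceil_le.1 hn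
  have hlog : 3 ≤ Real.log n := (Real.le_log_iff_exp_le (by linarith [Real.exp_pos 3])).2 hn3
  rw [Real.rpow_def_of_pos (by linarith [Real.exp_pos 3])] at h𝓕
  refine (WaiterForcesEnd.of_sum_lt_half (sum_pow_card_sdiffFamily_lt_half hlog h𝓕 hsize)).mono
    fun C hC f hf => ?_
  simpa using div_le_card_inter_of_forall_not_disjoint hC hf
end
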